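/- arXiv:0711.2605 — 4 statements merged into one kernel-verified Lean document; each statement's English description precedes it below -/
import Mathlib

section
/- If p is an extreme point of a compact convex body X in ℝⁿ and U is an open neighborhood of p, then there exists a hyperplane strictly separating p from X \ U. -/
open RealInnerProductSpace

/-!
Since `X \ {p}` is convex, `p` lies outside the convex hull of `X \ U`. By Carathéodory that hull
is a continuous image of a compact set, hence compact, so Hahn–Banach separates it strictly from
`p`.
-/

section Caratheodory

open Module Set

variable {𝕜 E : Type*} [Field 𝕜] [LinearOrder 𝕜] [IsStrictOrderedRing 𝕜]
  [AddCommGroup E] [Module 𝕜 E] [FiniteDimensional 𝕜 E]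

-- Carathéodory's family, padded by zero weights to the fixed length `finrank 𝕜 E + 1`.
theorem eq_convex_span_fin_finrank_succ_of_mem_convexHull {s : Set E} {x : E}
    (hx : x ∈ convexHull 𝕜 s) :
    ∃ w ∈ stdSimplex 𝕜 (Fin (finrank 𝕜 E + 1)), ∃ z : Fin (finrank 𝕜 E + 1) → E,
      (∀ j, z j ∈ s) ∧ ∑ j, w j • z j = x := by
  obtain ⟨ι, _, z, w, hzs, hz, hw₀, hw₁, rfl⟩ := eq_pos_convex_span_of_mem_convexHull hx
  have hcard : Fintype.card ι ≤ Fintype.card (Fin (finrank 𝕜 E + 1)) := by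
    rw [Fintype.card_fin]
    exact hz.card_le_finrank_succ.trans (Nat.succ_le_succ (Submodule.finrank_le _))
  obtain ⟨e⟩ := Function.Embedding.nonempty_of_card_le hcard
  obtain ⟨i₀⟩ : Nonempty ι := by
    by_contra! h
    simp at hw₁
  have hzero {j} (hj : j ∉ range e) : Function.extend e w 0 j = 0 :=
    Function.extend_apply' _ _ _ (by simpa using hj)
  refine ⟨Function.extend e w 0, ⟨fun j => ?_, ?_⟩, Function.extend e z fun _ => z i₀, fun j => ?_, ?_⟩
  · by_cases hj : j ∈ range e
    · obtain ⟨i, rfl⟩ := hj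
      simpa [e.injective.extend_apply] using (hw₀ i).le
    · simp [hzero hj]
  · rw [← hw₁]
    exact (Fintype.sum_of_injective e e.injective _ _ (fun j hj => hzero hj)
      fun i => (e.injective.extend_apply _ _ i).symm).symm
  · rcases Set.range_extend_subset _ _ _ (mem_range_self j) with h | ⟨_, _, h⟩
    · exact hzs h
    · exact h ▸ hzs (mem_range_self i₀)
  · refine (Fintype.sum_of_injective e e.injective _ _ (fun j hj => ?_) fun i => ?_).symm
    · simp [hzero hj]
    · simp [e.injective.extend_apply]

theorem convexHull_eq_image_stdSimplex_prod_pi (s : Set E) :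
    convexHull 𝕜 s = (fun q : (Fin (finrank 𝕜 E + 1) → 𝕜) × (Fin (finrank 𝕜 E + 1) → E) =>
      ∑ j, q.1 j • q.2 j) '' (stdSimplex 𝕜 _ ×ˢ univ.pi fun _ => s) := by
  refine Subset.antisymm (fun x hx => ?_) ?_
  · obtain ⟨w, hw, z, hzs, rfl⟩ := eq_convex_span_fin_finrank_succ_of_mem_convexHull hx
    exact ⟨(w, z), ⟨hw, fun j _ => hzs j⟩, rfl⟩
  · rintro _ ⟨⟨w, z⟩, ⟨⟨hw₀, hw₁⟩, hz⟩, rfl⟩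
    exact mem_convexHull_of_exists_fintype w z hw₀ hw₁ (fun j => hz j (mem_univ j)) rfl

end Caratheodory

theorem IsCompact.convexHull {E : Type*} [AddCommGroup E] [Module ℝ E] [TopologicalSpace E]
    [ContinuousAdd E] [ContinuousSMul ℝ E] [FiniteDimensional ℝ E] {s : Set E}
    (hs : IsCompact s) : IsCompact (convexHull ℝ s) := by
  rw [convexHull_eq_image_stdSimplex_prod_pi]
  exact ((isCompact_stdSimplex ℝ _).prod (isCompact_univ_pi fun _ => hs)).image <| by fun_prop

theorem extreme_point_strict_separation_general (n : ℕ)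
    (X : Set (EuclideanSpace ℝ (Fin n)))
    (hX : IsCompact X) (hconv : Convex ℝ X)
    (p : EuclideanSpace ℝ (Fin n)) (hp : p ∈ X.extremePoints ℝ)
    (U : Set (EuclideanSpace ℝ (Fin n))) (hU : IsOpen U) (hpU : p ∈ U) :
    ∃ (a : EuclideanSpace ℝ (Fin n)) (c : ℝ),
      c < ⟪a, p⟫ ∧ ∀ y ∈ X \ U, ⟪a, y⟫ < c := by
  have hpK : p ∉ convexHull ℝ (X \ U) := fun h =>
    (hconv.mem_extremePoints_iff_mem_sdiff_convexHull_sdiff.1 hp).2 <|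
      convexHull_mono (Set.sdiff_subset_sdiff_right (Set.singleton_subset_iff.2 hpU)) h
  obtain ⟨f, c, hf, hfp⟩ := geometric_hahn_banach_closed_point (convex_convexHull ℝ _)
    (hX.diff hU).convexHull.isClosed hpK
  refine ⟨(InnerProductSpace.toDual ℝ _).symm f, c, ?_, fun y hy => ?_⟩
  · simpa using hfp
  · simpa using hf y (subset_convexHull ℝ _ hy)

/-- An extreme point of a compact convex body can be strictly separated by a
hyperplane from the complement of any open neighborhood of it. -/
theorem extreme_point_strict_separation (n : ℕ)
    (X : Set (EuclideanSpace ℝ (Fin n)))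
    (hne : X.Nonempty) (hX : IsCompact X) (hconv : Convex ℝ X)
    (p : EuclideanSpace ℝ (Fin n)) (hp : p ∈ X.extremePoints ℝ)
    (U : Set (EuclideanSpace ℝ (Fin n))) (hU : IsOpen U) (hpU : p ∈ U) :
    ∃ (a : EuclideanSpace ℝ (Fin n)) (c : ℝ),
      c < ⟪a, p⟫ ∧ ∀ y ∈ X \ U, ⟪a, y⟫ < c :=
  extreme_point_strict_separation_general n X hX hconv p hp U hU hpU
end

section
/- If p is an extreme point of a compact convex set X and U is an open neighborhood of p, then p does not lie in the convex hull of X \ U. -/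
/-- An extreme point of a compact convex set is not in the convex hull of the
complement of any open neighborhood of it. -/
theorem extreme_point_not_in_hull_outside_nbhd (n : ℕ)
    (X : Set (EuclideanSpace ℝ (Fin n)))
    (hne : X.Nonempty) (hX : IsCompact X) (hconv : Convex ℝ X)
    (p : EuclideanSpace ℝ (Fin n)) (hp : p ∈ X.extremePoints ℝ)
    (U : Set (EuclideanSpace ℝ (Fin n))) (hU : IsOpen U) (hpU : p ∈ U) :
    p ∉ convexHull ℝ (X \ U) := by
  intro hmem
  have hsub : convexHull ℝ (X \ U) ⊆ X :=
    convexHull_min (Set.diff_subset) hconv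
  have h1 : p ∈ (convexHull ℝ (X \ U)).extremePoints ℝ :=
    inter_extremePoints_subset_extremePoints_of_subset hsub ⟨hmem, hp⟩
  have h2 : p ∈ X \ U := extremePoints_convexHull_subset h1
  exact h2.2 hpU
end

section
/- Let X ⊆ ℝ³ be a compact convex body, x ∈ ∂X, and suppose the set of normals to X at x contains two distinct vectors. Then x is not an extreme point of X if and only if there is a unique direction (up to sign) v, perpendicular to all normals at x, such that the line through x with direction v traverses x. -/
open RealInnerProductSpace

/-!
For convex `X`, a point `x ∈ X` fails to be extreme exactly when some nonzero direction traverses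
it. A traversing direction is orthogonal to every normal at `x`, because the linear functional
`⟪m, ·⟫` attains its maximum over `X` at an interior point of the traversing segment. Two distinct
unit normals cannot be opposite (then `X` would lie in a hyperplane and have empty interior), so
they span a plane, whose orthogonal complement in `ℝ³` is a line: any two traversing directions are
parallel.
-/

def Traverses {E : Type*} [AddCommGroup E] [Module ℝ E] (X : Set E) (x v : E) : Prop :=
  ∃ ε > 0, ∀ t : ℝ, |t| < ε → x + t • v ∈ X

section Module

variable {E : Type*} [AddCommGroup E] [Module ℝ E] {X : Set E} {x : E}

theorem Convex.traverses_sub_of_mem_openSegment (hconv : Convex ℝ X) {x₁ x₂ : E}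
    (hx₁ : x₁ ∈ X) (hx₂ : x₂ ∈ X) (hx : x ∈ openSegment ℝ x₁ x₂) : Traverses X x (x₂ - x₁) := by
  obtain ⟨a, b, ha, hb, hab, rfl⟩ := hx
  refine ⟨min a b, lt_min ha hb, fun t ht => ?_⟩
  have hta := abs_lt.1 (ht.trans_le (min_le_left _ _))
  have htb := abs_lt.1 (ht.trans_le (min_le_right _ _))
  have hline : a • x₁ + b • x₂ + t • (x₂ - x₁) = (a - t) • x₁ + (b + t) • x₂ := by module
  rw [hline]
  exact hconv hx₁ hx₂ (by linarith) (by linarith) (by linarith)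

theorem Traverses.exists_add_smul_mem_and_sub_smul_mem {v : E} (hv : Traverses X x v) :
    ∃ s : ℝ, 0 < s ∧ x + s • v ∈ X ∧ x - s • v ∈ X := by
  obtain ⟨ε, hε, hline⟩ := hv
  have hs : |ε / 2| < ε := by rw [abs_of_pos (by positivity)]; linarith
  refine ⟨ε / 2, by positivity, hline _ hs, ?_⟩
  simpa [sub_eq_add_neg] using hline (-(ε / 2)) (by rwa [abs_neg])

theorem notMem_extremePoints_of_traverses {v : E} (hv0 : v ≠ 0) (hv : Traverses X x v) :
    x ∉ X.extremePoints ℝ := by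
  obtain ⟨s, hs, hp, hq⟩ := hv.exists_add_smul_mem_and_sub_smul_mem
  intro hext
  have hmid : x ∈ openSegment ℝ (x - s • v) (x + s • v) :=
    ⟨1 / 2, 1 / 2, by norm_num, by norm_num, by norm_num, by module⟩
  have hq_eq : x - s • v = x := hext.2 hq hp hmid
  exact hv0 ((smul_eq_zero.1 (by simpa using hq_eq)).resolve_left hs.ne')

theorem Convex.notMem_extremePoints_iff_exists_traverses (hconv : Convex ℝ X) (hx : x ∈ X) :
    x ∉ X.extremePoints ℝ ↔ ∃ v ≠ 0, Traverses X x v := by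
  refine ⟨fun hne => ?_, fun ⟨v, hv0, hv⟩ => notMem_extremePoints_of_traverses hv0 hv⟩
  rw [mem_extremePoints] at hne
  push Not at hne
  obtain ⟨x₁, hx₁, x₂, hx₂, hseg, hne₁⟩ := hne hx
  refine ⟨x₂ - x₁, sub_ne_zero.2 fun h => ?_, hconv.traverses_sub_of_mem_openSegment hx₁ hx₂ hseg⟩
  rw [h, openSegment_same, Set.mem_singleton_iff] at hseg
  exact hne₁ hseg.symm (h.trans hseg.symm)

theorem traverses_of_mem_interior [TopologicalSpace E] [ContinuousAdd E] [ContinuousSMul ℝ E]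
    (hx : x ∈ interior X) (v : E) : Traverses X x v := by
  have hcont : Continuous fun t : ℝ => x + t • v := by fun_prop
  have hev : ∀ᶠ t in nhds (0 : ℝ), x + t • v ∈ X :=
    hcont.continuousAt.preimage_mem_nhds (by simpa using mem_interior_iff_mem_nhds.1 hx)
  obtain ⟨ε, hε, h⟩ := Metric.eventually_nhds_iff.1 hev
  exact ⟨ε, hε, fun t ht => h (by simpa using ht)⟩

end Module

theorem linearIndependent_pair_of_norm_eq_one {E : Type*} [NormedAddCommGroup E] [NormedSpace ℝ E]
    {n₁ n₂ : E} (hn₁ : ‖n₁‖ = 1) (hn₂ : ‖n₂‖ = 1)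
    (hne : n₁ ≠ n₂) (hne' : n₂ ≠ -n₁) : LinearIndependent ℝ ![n₁, n₂] := by
  rw [LinearIndependent.pair_iff' (norm_ne_zero_iff.1 (hn₁ ▸ one_ne_zero))]
  intro a ha
  have habs : |a| = 1 := by simpa [norm_smul, hn₁, hn₂] using congrArg norm ha
  rcases abs_eq zero_le_one |>.1 habs with rfl | rfl
  · exact hne (by simpa using ha)
  · exact hne' (by simpa using ha.symm)

section InnerProductSpace

variable {E : Type*} [NormedAddCommGroup E] [InnerProductSpace ℝ E] {X : Set E} {x : E}

theorem inner_eq_zero_of_traverses {m v : E} (hm : ∀ x' ∈ X, ⟪m, x'⟫ ≤ ⟪m, x⟫)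
    (hv : Traverses X x v) : ⟪m, v⟫ = 0 := by
  obtain ⟨s, hs, hp, hq⟩ := hv.exists_add_smul_mem_and_sub_smul_mem
  have h₁ := hm _ hp
  have h₂ := hm _ hq
  rw [inner_add_right, real_inner_smul_right] at h₁
  rw [inner_sub_right, real_inner_smul_right] at h₂
  have hsv : s * ⟪m, v⟫ = 0 := by linarith
  exact (mul_eq_zero.1 hsv).resolve_left hs.ne'

/-- `⟪m, ·⟫` is constant on `X`, so `m` is also a normal at an interior point, where the direction
`m` itself traverses; hence `⟪m, m⟫ = 0`. -/
theorem eq_zero_of_inner_le_of_neg_inner_le (hint : (interior X).Nonempty) {m : E}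
    (hm : ∀ x' ∈ X, ⟪m, x'⟫ ≤ ⟪m, x⟫) (hm' : ∀ x' ∈ X, ⟪-m, x'⟫ ≤ ⟪-m, x⟫) : m = 0 := by
  obtain ⟨y, hy⟩ := hint
  have hconst : ∀ x' ∈ X, ⟪m, x'⟫ = ⟪m, x⟫ := fun x' hx' =>
    le_antisymm (hm x' hx') (by simpa using hm' x' hx')
  have hmy : ∀ x' ∈ X, ⟪m, x'⟫ ≤ ⟪m, y⟫ := fun x' hx' =>
    (hconst x' hx').trans_le (hconst y (interior_subset hy)).ge
  exact inner_self_eq_zero.1 (inner_eq_zero_of_traverses hmy (traverses_of_mem_interior hy m))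

theorem finrank_orthogonal_span_pair_add_two [FiniteDimensional ℝ E] {n₁ n₂ : E}
    (hli : LinearIndependent ℝ ![n₁, n₂]) :
    Module.finrank ℝ (ℝ ∙ n₁ ⊔ ℝ ∙ n₂)ᗮ + 2 = Module.finrank ℝ E := by
  have hspan : ℝ ∙ n₁ ⊔ ℝ ∙ n₂ = Submodule.span ℝ (Set.range ![n₁, n₂]) := by
    rw [Matrix.range_cons, Matrix.range_cons, Matrix.range_empty, Set.union_empty,
      Set.singleton_union, Submodule.span_insert]
  rw [← (ℝ ∙ n₁ ⊔ ℝ ∙ n₂).finrank_add_finrank_orthogonal, hspan, finrank_span_eq_card hli,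
    Fintype.card_fin, add_comm]

theorem exists_eq_smul_of_inner_eq_zero (hE : Module.finrank ℝ E = 3) {n₁ n₂ u w : E}
    (hli : LinearIndependent ℝ ![n₁, n₂]) (hu0 : u ≠ 0)
    (hu₁ : ⟪n₁, u⟫ = 0) (hu₂ : ⟪n₂, u⟫ = 0) (hw₁ : ⟪n₁, w⟫ = 0) (hw₂ : ⟪n₂, w⟫ = 0) :
    ∃ c : ℝ, w = c • u := by
  have : FiniteDimensional ℝ E := Module.finite_of_finrank_eq_succ hE
  have hrank : Module.finrank ℝ (ℝ ∙ n₁ ⊔ ℝ ∙ n₂)ᗮ = 1 := by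
    have := finrank_orthogonal_span_pair_add_two hli; omega
  have hmem : ∀ z : E, ⟪n₁, z⟫ = 0 → ⟪n₂, z⟫ = 0 → z ∈ (ℝ ∙ n₁ ⊔ ℝ ∙ n₂)ᗮ := fun z h₁ h₂ => by
    rw [← Submodule.inf_orthogonal]
    exact ⟨Submodule.mem_orthogonal_singleton_iff_inner_right.2 h₁,
      Submodule.mem_orthogonal_singleton_iff_inner_right.2 h₂⟩
  obtain ⟨c, hc⟩ := (finrank_eq_one_iff_of_nonzero' ⟨u, hmem u hu₁ hu₂⟩
    (by simpa using hu0)).1 hrank ⟨w, hmem w hw₁ hw₂⟩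
  exact ⟨c, congrArg Subtype.val hc.symm⟩

end InnerProductSpace

/-- At a boundary point with at least two distinct normals, being a nonextreme
point is equivalent to the existence of a unique (up to scaling) traversing
direction, which is perpendicular to all normals at the point. -/
theorem nonextreme_iff_unique_traversing_direction
    (X : Set (EuclideanSpace ℝ (Fin 3)))
    (hX : IsCompact X) (hconv : Convex ℝ X) (hint : (interior X).Nonempty)
    (x : EuclideanSpace ℝ (Fin 3)) (hx : x ∈ frontier X)
    (n₁ n₂ : EuclideanSpace ℝ (Fin 3)) (hn : n₁ ≠ n₂)
    (hn₁ : ‖n₁‖ = 1) (hn₂ : ‖n₂‖ = 1)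
    (hnormal₁ : ∀ x' ∈ X, ⟪n₁, x'⟫ ≤ ⟪n₁, x⟫)
    (hnormal₂ : ∀ x' ∈ X, ⟪n₂, x'⟫ ≤ ⟪n₂, x⟫) :
    x ∉ X.extremePoints ℝ ↔
      ∃ v : EuclideanSpace ℝ (Fin 3), v ≠ 0 ∧
        (∀ m : EuclideanSpace ℝ (Fin 3), ‖m‖ = 1 →
          (∀ x' ∈ X, ⟪m, x'⟫ ≤ ⟪m, x⟫) → ⟪m, v⟫ = 0) ∧
        (∃ ε > 0, ∀ t : ℝ, |t| < ε → x + t • v ∈ X) ∧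
        (∀ w : EuclideanSpace ℝ (Fin 3), w ≠ 0 →
          (∃ ε > 0, ∀ t : ℝ, |t| < ε → x + t • w ∈ X) →
          ∃ c : ℝ, w = c • v) := by
  have hxX : x ∈ X := hX.isClosed.frontier_subset hx
  have hn₁0 : n₁ ≠ 0 := norm_ne_zero_iff.1 (hn₁ ▸ one_ne_zero)
  have hli : LinearIndependent ℝ ![n₁, n₂] := linearIndependent_pair_of_norm_eq_one hn₁ hn₂ hn
    (by rintro rfl; exact hn₁0 (eq_zero_of_inner_le_of_neg_inner_le hint hnormal₁ hnormal₂))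
  rw [hconv.notMem_extremePoints_iff_exists_traverses hxX]
  constructor
  · rintro ⟨v, hv0, hv⟩
    refine ⟨v, hv0, fun m _ hm => inner_eq_zero_of_traverses hm hv, hv, fun w _ hw => ?_⟩
    exact exists_eq_smul_of_inner_eq_zero finrank_euclideanSpace_fin hli hv0
      (inner_eq_zero_of_traverses hnormal₁ hv) (inner_eq_zero_of_traverses hnormal₂ hv)
      (inner_eq_zero_of_traverses hnormal₁ hw) (inner_eq_zero_of_traverses hnormal₂ hw)
  · rintro ⟨v, hv0, -, hv, -⟩
    exact ⟨v, hv0, hv⟩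
end

section
/- Let X ⊆ ℝ³ be a compact convex body and x ∈ ∂X a point with no line traversing it (i.e., an extreme point of X). Then for every neighborhood U of x, the set of normals G(U ∩ ∂X) contains a spherical cap of positive radius around some direction; in particular, G(U ∩ ∂X) has positive spherical measure. -/
open RealInnerProductSpace
open Set Topology

/-!
Since `x` is extreme, `X \ {x}` is convex, so the convex hull of the compact set `X \ U` misses
`x`; in finite dimension that hull is compact, hence strictly separated from `x` by a unit normal
`n₀`. Strict separation from a compact set survives small perturbations of the normal, so for every
unit `m` near `n₀` the maximum of `⟪m, ·⟫` over `X` is attained only inside `U`, and a maximizer of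
a nonzero linear functional on a closed set lies on its frontier.
-/

theorem isCompact_convexHull {E : Type*} [NormedAddCommGroup E] [NormedSpace ℝ E]
    [FiniteDimensional ℝ E] {s : Set E} (hs : IsCompact s) : IsCompact (convexHull ℝ s) := by
  let combo (k : ℕ) : (Fin k → ℝ) × (Fin k → E) → E := fun p => ∑ i, p.1 i • p.2 i
  have hcombo : ∀ k, Continuous (combo k) := fun k => by fun_prop
  suffices convexHull ℝ s = ⋃ k ∈ Finset.range (Module.finrank ℝ E + 2),
      combo k '' (stdSimplex ℝ (Fin k) ×ˢ univ.pi fun _ => s) by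
    rw [this]
    exact (Finset.range _).isCompact_biUnion fun k _ =>
      ((isCompact_stdSimplex _ _).prod (isCompact_univ_pi fun _ => hs)).image (hcombo k)
  refine Subset.antisymm (fun y hy => ?_) ?_
  · -- Carathéodory: at most `finrank ℝ E + 1` points of `s` are needed
    obtain ⟨ι, _, z, w, hzs, hind, hw₀, hw₁, rfl⟩ := eq_pos_convex_span_of_mem_convexHull hy
    have hcard : Fintype.card ι < Module.finrank ℝ E + 2 := by
      have := Submodule.finrank_le (vectorSpan ℝ (range z))
      have := hind.card_le_finrank_succ
      omega
    let e := Fintype.equivFin ι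
    refine mem_biUnion (Finset.mem_range.2 hcard)
      ⟨(w ∘ e.symm, z ∘ e.symm), ⟨⟨fun i => (hw₀ _).le, ?_⟩, fun i _ => hzs (mem_range_self _)⟩, ?_⟩
    · rw [← hw₁]; exact e.symm.sum_comp w
    · exact e.symm.sum_comp fun i => w i • z i
  · simp only [iUnion_subset_iff, image_subset_iff]
    rintro k - ⟨w, z⟩ ⟨⟨hw₀, hw₁⟩, hz⟩
    exact (convex_convexHull ℝ s).sum_mem (fun i _ => hw₀ i) hw₁
      fun i _ => subset_convexHull ℝ s (hz i (mem_univ i))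

theorem notMem_convexHull_sdiff_of_mem_extremePoints {E : Type*} [AddCommGroup E] [Module ℝ E]
    {X U : Set E} {x : E} (hX : Convex ℝ X) (hx : x ∈ X.extremePoints ℝ) (hxU : x ∈ U) :
    x ∉ convexHull ℝ (X \ U) := fun h =>
  (convexHull_min (sdiff_subset_sdiff_right (singleton_subset_iff.2 hxU))
    (hX.mem_extremePoints_iff_convex_sdiff.1 hx).2 h).2 rfl

theorem IsCompact.exists_isMaxOn_mem_of_forall_lt {α β : Type*} [TopologicalSpace α]
    [LinearOrder β] [TopologicalSpace β] [ClosedIciTopology β] {X U : Set α} {f : α → β}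
    (hX : IsCompact X) (hf : ContinuousOn f X) {x : α} (hx : x ∈ X)
    (hlt : ∀ z ∈ X \ U, f z < f x) : ∃ y ∈ X ∩ U, IsMaxOn f X y := by
  obtain ⟨y, hyX, hmax⟩ := hX.exists_isMaxOn ⟨x, hx⟩ hf
  refine ⟨y, ⟨hyX, ?_⟩, hmax⟩
  by_contra hyU
  exact (hlt y ⟨hyX, hyU⟩).not_ge (hmax hx)

theorem mem_frontier_of_isMaxOn {E : Type*} [NormedAddCommGroup E] [NormedSpace ℝ E]
    {X : Set E} {f : E →L[ℝ] ℝ} {y : E} (hX : IsClosed X) (hf : f ≠ 0) (hy : y ∈ X)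
    (hmax : IsMaxOn f X y) : y ∈ frontier X := by
  rw [hX.frontier_eq]
  exact ⟨hy, fun hint => hf <|
    (hmax.isLocalMax (mem_interior_iff_mem_nhds.1 hint)).hasFDerivAt_eq_zero f.hasFDerivAt⟩

section InnerProductSpace

variable {E : Type*} [NormedAddCommGroup E] [InnerProductSpace ℝ E]

theorem exists_norm_eq_one_forall_inner_lt [CompleteSpace E] [Nontrivial E] {K : Set E} {x : E}
    (hK : Convex ℝ K) (hKc : IsClosed K) (hx : x ∉ K) :
    ∃ n : E, ‖n‖ = 1 ∧ ∀ z ∈ K, ⟪n, z⟫ < ⟪n, x⟫ := by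
  obtain ⟨f, u, hfK, hfx⟩ := geometric_hahn_banach_closed_point hK hKc hx
  obtain ⟨n, hn⟩ : ∃ n : E, ∀ y, ⟪n, y⟫ = f y := ⟨_, fun _ => InnerProductSpace.toDual_symm_apply⟩
  have hlt : ∀ z ∈ K, ⟪n, z⟫ < ⟪n, x⟫ := fun z hz => by
    rw [hn, hn]; exact (hfK z hz).trans hfx
  rcases K.eq_empty_or_nonempty with rfl | ⟨a, ha⟩
  · obtain ⟨v, hv⟩ := exists_norm_eq E zero_le_one
    exact ⟨v, hv, by simp⟩
  have hn₀ : n ≠ 0 := fun h => by simpa [h] using hlt a ha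
  refine ⟨‖n‖⁻¹ • n, by simp [norm_smul, hn₀], fun z hz => ?_⟩
  simp only [real_inner_smul_left]
  exact mul_lt_mul_of_pos_left (hlt z hz) (by positivity)

theorem IsCompact.eventually_forall_inner_lt {K : Set E} (hK : IsCompact K) {n x : E}
    (h : ∀ z ∈ K, ⟪n, z⟫ < ⟪n, x⟫) : ∀ᶠ m in 𝓝 n, ∀ z ∈ K, ⟪m, z⟫ < ⟪m, x⟫ :=
  hK.eventually_forall_of_forall_eventually (P := fun m z => ⟪m, z⟫ < ⟪m, x⟫) fun z hz =>
    (continuous_fst.inner continuous_snd).continuousAt.eventually_lt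
      (continuous_fst.inner continuous_const).continuousAt (h z hz)

end InnerProductSpace

theorem extreme_point_gauss_image_contains_cap_general
    (X : Set (EuclideanSpace ℝ (Fin 3)))
    (hX : IsCompact X) (hconv : Convex ℝ X)
    (x : EuclideanSpace ℝ (Fin 3))
    (hext : x ∈ X.extremePoints ℝ)
    (U : Set (EuclideanSpace ℝ (Fin 3))) (hU : IsOpen U) (hxU : x ∈ U) :
    ∃ (n₀ : EuclideanSpace ℝ (Fin 3)) (r : ℝ), ‖n₀‖ = 1 ∧ 0 < r ∧
      ∀ m : EuclideanSpace ℝ (Fin 3), ‖m‖ = 1 → ‖m - n₀‖ < r →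
        ∃ y ∈ U ∩ frontier X, ∀ x' ∈ X, ⟪m, x'⟫ ≤ ⟪m, y⟫ := by
  have hK : IsCompact (convexHull ℝ (X \ U)) := isCompact_convexHull (hX.diff hU)
  obtain ⟨n₀, hn₀, hsep⟩ := exists_norm_eq_one_forall_inner_lt (convex_convexHull ℝ _)
    hK.isClosed (notMem_convexHull_sdiff_of_mem_extremePoints hconv hext hxU)
  obtain ⟨r, hr, hcap⟩ := Metric.eventually_nhds_iff.1 (hK.eventually_forall_inner_lt hsep)
  refine ⟨n₀, r, hn₀, hr, fun m hm hmr => ?_⟩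
  have hlt : ∀ z ∈ X \ U, ⟪m, z⟫ < ⟪m, x⟫ := fun z hz =>
    hcap (by rwa [dist_eq_norm]) z (subset_convexHull ℝ _ hz)
  obtain ⟨y, ⟨hyX, hyU⟩, hmax⟩ := hX.exists_isMaxOn_mem_of_forall_lt
    (continuous_const.inner continuous_id).continuousOn hext.1 hlt
  have hm₀ : innerSL ℝ m ≠ 0 := by
    rw [← norm_ne_zero_iff, innerSL_apply_norm, hm]; exact one_ne_zero
  exact ⟨y, ⟨hyU, mem_frontier_of_isMaxOn hX.isClosed hm₀ hyX hmax⟩, hmax⟩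

/-- At an extreme point of a compact convex body, the Gauss image of any
neighborhood of the point on the boundary contains a spherical cap of
positive radius. -/
theorem extreme_point_gauss_image_contains_cap
    (X : Set (EuclideanSpace ℝ (Fin 3)))
    (hX : IsCompact X) (hconv : Convex ℝ X) (hint : (interior X).Nonempty)
    (x : EuclideanSpace ℝ (Fin 3)) (hx : x ∈ frontier X)
    (hext : x ∈ X.extremePoints ℝ)
    (U : Set (EuclideanSpace ℝ (Fin 3))) (hU : IsOpen U) (hxU : x ∈ U) :
    ∃ (n₀ : EuclideanSpace ℝ (Fin 3)) (r : ℝ), ‖n₀‖ = 1 ∧ 0 < r ∧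
      ∀ m : EuclideanSpace ℝ (Fin 3), ‖m‖ = 1 → ‖m - n₀‖ < r →
        ∃ y ∈ U ∩ frontier X, ∀ x' ∈ X, ⟪m, x'⟫ ≤ ⟪m, y⟫ :=
  extreme_point_gauss_image_contains_cap_general X hX hconv x hext U hU hxU
end
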